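/- arXiv:math/0305092 — 3 statements merged into one kernel-verified Lean document; each statement's English description precedes it below -/
import Mathlib

section
/- Let 0 < α ≤ 2, H > 0 and H' = H − 1/α with H' > −1/2. Let ℓ be a nonnegative integer with ℓ > H, let D > 0, and let ψ: ℝ → ℝ be an ℓ-times continuously differentiable function supported in [−D, D] whose moments vanish up to order ℓ, i.e. ∫_ℝ t^k ψ(t) dt = 0 for all 0 ≤ k ≤ ℓ. For each positive integer n set τ_n^α = ∫_0^∞ | ∫_ℝ (u + n − s)_+^{H'} ψ(u) du |^α ds, where x_+^{H'} denotes x^{H'} for x > 0 and 0 for x ≤ 0. Then sup_{n ≥ 1} τ_n < +∞. -/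
open MeasureTheory Filter Set
open scoped ENNReal NNReal Topology

/-- `posPow x e = x^e` for `x > 0` and `0` for `x ≤ 0` (the function `x ↦ x₊^e`). -/
noncomputable def posPow (x e : ℝ) : ℝ := if 0 < x then x ^ e else 0

/-!
Put `g(t) = ∫ (u + t)₊^{H'} ψ(u) du`. Then `τ_n^α = ∫_{s>0} |g(n - s)|^α ds ≤ ∫_ℝ |g|^α`, so it
suffices that `|g|^α` be integrable. Now `g` vanishes for `t ≤ -D`, and it is bounded on compact
sets because `x₊^{H'}` is locally integrable (`H' > -1`). For `t > 2D` the vanishing moments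
annihilate the Taylor polynomial of degree `ℓ - 1` of `x ↦ x^{H'}` at `t - D`, and the Lagrange
remainder gives `|g(t)| ≲ (t - D)^{H' - ℓ}`; this is `α`-integrable at infinity because
`(H' - ℓ) α = (H - ℓ) α - 1 < -1`.
-/

open scoped Nat

lemma posPow_nonneg (x e : ℝ) : 0 ≤ posPow x e := by
  unfold posPow
  split_ifs with hx
  exacts [Real.rpow_nonneg hx.le e, le_rfl]

lemma posPow_eq_indicator (e : ℝ) : (posPow · e) = (Ioi 0).indicator (· ^ e) := by
  ext x
  simp only [posPow, indicator, mem_Ioi]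

lemma intervalIntegrable_posPow {e : ℝ} (he : -1 < e) (a b : ℝ) :
    IntervalIntegrable (posPow · e) volume a b := by
  rw [posPow_eq_indicator]
  obtain ⟨h₁, h₂⟩ := intervalIntegral.intervalIntegrable_rpow' he (a := a) (b := b)
  exact ⟨h₁.indicator measurableSet_Ioi, h₂.indicator measurableSet_Ioi⟩

lemma continuous_taylorWithinEval {E : Type*} [NormedAddCommGroup E] [NormedSpace ℝ E]
    (f : ℝ → E) (n : ℕ) (s : Set ℝ) (x₀ : ℝ) : Continuous (taylorWithinEval f n s x₀) := by
  simp_rw [funext (taylor_within_apply f n s x₀)]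
  fun_prop

section Moments

variable {ψ : ℝ → ℝ} {m : ℕ}

lemma integral_add_pow_mul_eq_zero (hψ : Continuous ψ) (hψc : HasCompactSupport ψ)
    (hmom : ∀ k ≤ m, ∫ u, u ^ k * ψ u = 0) {k : ℕ} (hk : k ≤ m) (c : ℝ) :
    ∫ u, (u + c) ^ k * ψ u = 0 := by
  have hint (j : ℕ) : Integrable (fun u => u ^ j * ψ u) :=
    ((continuous_pow j).mul hψ).integrable_of_hasCompactSupport hψc.mul_left
  have hexpand : (fun u => (u + c) ^ k * ψ u) =
      fun u => ∑ j ∈ Finset.range (k + 1), (c ^ (k - j) * k.choose j) * (u ^ j * ψ u) := by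
    ext u
    rw [add_pow, Finset.sum_mul]
    exact Finset.sum_congr rfl fun j _ => by ring
  rw [hexpand, integral_finsetSum _ fun j _ => (hint j).const_mul _]
  refine Finset.sum_eq_zero fun j hj => ?_
  rw [integral_const_mul, hmom j (by grind), mul_zero]

lemma integral_taylorWithinEval_add_mul_eq_zero (hψ : Continuous ψ) (hψc : HasCompactSupport ψ)
    (hmom : ∀ k ≤ m, ∫ u, u ^ k * ψ u = 0) (f : ℝ → ℝ) (s : Set ℝ) (x₀ c : ℝ) :
    ∫ u, taylorWithinEval f m s x₀ (u + c) * ψ u = 0 := by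
  have hint (k : ℕ) : Integrable (fun u => (u + (c - x₀)) ^ k * ψ u) :=
    (((continuous_add_const _).pow k).mul hψ).integrable_of_hasCompactSupport hψc.mul_left
  have hexpand : (fun u => taylorWithinEval f m s x₀ (u + c) * ψ u) =
      fun u => ∑ k ∈ Finset.range (m + 1),
        ((k ! : ℝ)⁻¹ * iteratedDerivWithin k f s x₀) * ((u + (c - x₀)) ^ k * ψ u) := by
    ext u
    rw [taylor_within_apply, Finset.sum_mul]
    exact Finset.sum_congr rfl fun k _ => by rw [smul_eq_mul]; ring
  rw [hexpand, integral_finsetSum _ fun k _ => (hint k).const_mul _]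
  refine Finset.sum_eq_zero fun k hk => ?_
  rw [integral_const_mul, integral_add_pow_mul_eq_zero hψ hψc hmom (by grind), mul_zero]

end Moments

lemma abs_integral_add_mul_le_of_moments_eq_zero {f ψ : ℝ → ℝ} {m : ℕ} {c D M : ℝ} (hD : 0 < D)
    (hf : ContDiffOn ℝ (m + 1) f (Icc (c - D) (c + D)))
    (hM : ∀ y ∈ Icc (c - D) (c + D), ‖iteratedDerivWithin (m + 1) f (Icc (c - D) (c + D)) y‖ ≤ M)
    (hψ : Continuous ψ) (hsupp : Function.support ψ ⊆ Icc (-D) D)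
    (hmom : ∀ k ≤ m, ∫ u, u ^ k * ψ u = 0) :
    |∫ u, f (u + c) * ψ u| ≤ M * (2 * D) ^ (m + 1) / m ! * ∫ u, |ψ u| := by
  set P := taylorWithinEval f m (Icc (c - D) (c + D)) (c - D)
  set R := M * (2 * D) ^ (m + 1) / (m ! : ℝ)
  have hψc : HasCompactSupport ψ :=
    .of_support_subset_isCompact isCompact_Icc hsupp
  have hψ₀ := Function.support_subset_iff'.1 hsupp
  have hvanish (g : ℝ → ℝ) : ∀ u ∉ Icc (-D) D, g u * ψ u = 0 := fun u hu => by
    rw [hψ₀ u hu, mul_zero]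
  have hmaps : MapsTo (· + c) (Icc (-D) D) (Icc (c - D) (c + D)) := fun u hu =>
    ⟨by linarith [hu.1], by linarith [hu.2]⟩
  have hfint : IntegrableOn (fun u => f (u + c) * ψ u) (Icc (-D) D) :=
    ((hf.continuousOn.comp (continuous_add_const c).continuousOn hmaps).mul
      hψ.continuousOn).integrableOn_Icc
  have hPint : IntegrableOn (fun u => P (u + c) * ψ u) (Icc (-D) D) :=
    (((continuous_taylorWithinEval _ _ _ _).comp (continuous_add_const c)).mul
      hψ).continuousOn.integrableOn_Icc
  have hR : ∀ u ∈ Icc (-D) D, |f (u + c) - P (u + c)| ≤ R := fun u hu => by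
    have hM0 : 0 ≤ M := (norm_nonneg _).trans (hM c ⟨by linarith, by linarith⟩)
    refine (taylor_mean_remainder_bound (by linarith) hf (hmaps hu) hM).trans ?_
    have h₀ : 0 ≤ u + c - (c - D) := by linarith [hu.1]
    have h₁ : u + c - (c - D) ≤ 2 * D := by linarith [hu.2]
    unfold R
    gcongr
  calc |∫ u, f (u + c) * ψ u|
      = ‖∫ u in Icc (-D) D, (f (u + c) - P (u + c)) * ψ u‖ := by
        simp_rw [sub_mul]
        rw [integral_sub hfint hPint, setIntegral_eq_integral_of_forall_compl_eq_zero (hvanish _),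
          setIntegral_eq_integral_of_forall_compl_eq_zero (hvanish _),
          integral_taylorWithinEval_add_mul_eq_zero hψ hψc hmom, sub_zero, Real.norm_eq_abs]
    _ ≤ ∫ u in Icc (-D) D, R * |ψ u| := by
        refine norm_integral_le_of_norm_le (hψ.abs.continuousOn.integrableOn_Icc.const_mul R)
          ((ae_restrict_iff' measurableSet_Icc).2 (Eventually.of_forall fun u hu => ?_))
        rw [Real.norm_eq_abs, abs_mul]
        exact mul_le_mul_of_nonneg_right (hR u hu) (abs_nonneg _)
    _ = R * ∫ u, |ψ u| := by
        rw [integral_const_mul, setIntegral_eq_integral_of_forall_compl_eq_zero]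
        intro u hu
        rw [hψ₀ u hu, abs_zero]

lemma iteratedDerivWithin_rpow_const {p : ℝ} {s : Set ℝ} (hs : UniqueDiffOn ℝ s)
    (hs₀ : s ⊆ Ioi 0) (k : ℕ) {y : ℝ} (hy : y ∈ s) :
    iteratedDerivWithin k (· ^ p) s y = (∏ j ∈ Finset.range k, (p - j)) * y ^ (p - k) := by
  induction k generalizing y with
  | zero => simp
  | succ k ih =>
    have hder : HasDerivAt (fun x => (∏ j ∈ Finset.range k, (p - j)) * x ^ (p - k))
        ((∏ j ∈ Finset.range k, (p - j)) * ((p - k) * y ^ (p - k - 1))) y :=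
      (Real.hasDerivAt_rpow_const (Or.inl (hs₀ hy).ne')).const_mul _
    rw [iteratedDerivWithin_succ, derivWithin_congr (fun z hz => ih hz) (ih hy),
      hder.hasDerivWithinAt.derivWithin (hs y hy), Finset.prod_range_succ,
      show p - ((k + 1 : ℕ) : ℝ) = p - k - 1 by push_cast; ring]
    ring

noncomputable def waveletCoeff (e : ℝ) (ψ : ℝ → ℝ) (t : ℝ) : ℝ :=
  ∫ u, posPow (u + t) e * ψ u

section WaveletCoeff

variable {ψ : ℝ → ℝ} {e D : ℝ}

lemma waveletCoeff_eq_zero_of_le (hsupp : Function.support ψ ⊆ Icc (-D) D) {t : ℝ}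
    (ht : t ≤ -D) : waveletCoeff e ψ t = 0 := by
  refine integral_eq_zero_of_ae (Eventually.of_forall fun u => ?_)
  by_cases hu : ψ u = 0
  · simp [hu]
  · have hut : ¬ 0 < u + t := by linarith [(hsupp hu).2]
    simp [posPow, hut]

lemma abs_waveletCoeff_le (he : -1 < e) (hD : 0 ≤ D) {C : ℝ} (hC : ∀ u, |ψ u| ≤ C)
    (hsupp : Function.support ψ ⊆ Icc (-D) D) (t : ℝ) :
    |waveletCoeff e ψ t| ≤ C * ∫ x in (t - D)..(t + D), posPow x e := by
  have hvanish : ∀ u ∉ Icc (-D) D, posPow (u + t) e * ψ u = 0 := fun u hu => by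
    rw [Function.support_subset_iff'.1 hsupp u hu, mul_zero]
  have hshift : ∫ u in -D..D, posPow (u + t) e = ∫ x in (t - D)..(t + D), posPow x e := by
    rw [intervalIntegral.integral_comp_add_right (posPow · e), neg_add_eq_sub, add_comm D]
  have hint : IntegrableOn (fun u => posPow (u + t) e) (Icc (-D) D) := by
    rw [← intervalIntegrable_iff_integrableOn_Icc_of_le (by linarith)]
    simpa using (intervalIntegrable_posPow he (t - D) (t + D)).comp_add_right t
  calc |waveletCoeff e ψ t|
      = ‖∫ u in Icc (-D) D, posPow (u + t) e * ψ u‖ := by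
        rw [waveletCoeff, setIntegral_eq_integral_of_forall_compl_eq_zero hvanish,
          Real.norm_eq_abs]
    _ ≤ ∫ u in Icc (-D) D, C * posPow (u + t) e := by
        refine norm_integral_le_of_norm_le (hint.const_mul C) (Eventually.of_forall fun u => ?_)
        rw [Real.norm_eq_abs, abs_mul, abs_of_nonneg (posPow_nonneg _ _), mul_comm]
        exact mul_le_mul_of_nonneg_right (hC u) (posPow_nonneg _ _)
    _ = C * ∫ x in (t - D)..(t + D), posPow x e := by
        rw [integral_const_mul, integral_Icc_eq_integral_Ioc,
          ← intervalIntegral.integral_of_le (by linarith), hshift]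

lemma abs_waveletCoeff_le_of_mem_Icc (he : -1 < e) (hD : 0 ≤ D) {C : ℝ} (hC : ∀ u, |ψ u| ≤ C)
    (hsupp : Function.support ψ ⊆ Icc (-D) D) {t : ℝ} (ht : t ∈ Icc (-D) (2 * D)) :
    |waveletCoeff e ψ t| ≤ C * ∫ x in (-(2 * D))..(3 * D), posPow x e := by
  refine (abs_waveletCoeff_le he hD hC hsupp t).trans (mul_le_mul_of_nonneg_left ?_
    ((abs_nonneg _).trans (hC 0)))
  exact intervalIntegral.integral_mono_interval (by linarith [ht.1]) (by linarith)
    (by linarith [ht.2]) (Eventually.of_forall fun x => posPow_nonneg x e)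
    (intervalIntegrable_posPow he _ _)

lemma abs_waveletCoeff_le_rpow {m : ℕ} (hD : 0 < D) (hψ : Continuous ψ)
    (hsupp : Function.support ψ ⊆ Icc (-D) D) (hmom : ∀ k ≤ m, ∫ u, u ^ k * ψ u = 0)
    (he : e - (m + 1) ≤ 0) {t : ℝ} (ht : D < t) :
    |waveletCoeff e ψ t| ≤ |∏ j ∈ Finset.range (m + 1), (e - j)| * (2 * D) ^ (m + 1) / m ! *
      (∫ u, |ψ u|) * (t - D) ^ (e - (m + 1)) := by
  have hpos : 0 < t - D := sub_pos.2 ht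
  have hs₀ : Icc (t - D) (t + D) ⊆ Ioi 0 := fun y hy => hpos.trans_le hy.1
  have hrpow : waveletCoeff e ψ t = ∫ u, (u + t) ^ e * ψ u := by
    refine integral_congr_ae (Eventually.of_forall fun u => ?_)
    by_cases hu : ψ u = 0
    · simp [hu]
    · have hut : 0 < u + t := by linarith [(hsupp hu).1]
      simp [posPow, hut]
  have hderiv : ∀ y ∈ Icc (t - D) (t + D),
      ‖iteratedDerivWithin (m + 1) (· ^ e) (Icc (t - D) (t + D)) y‖ ≤
        |∏ j ∈ Finset.range (m + 1), (e - j)| * (t - D) ^ (e - (m + 1)) := fun y hy => by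
    rw [iteratedDerivWithin_rpow_const (uniqueDiffOn_Icc (by linarith)) hs₀ _ hy, norm_mul,
      Real.norm_eq_abs, Real.norm_of_nonneg (Real.rpow_nonneg (hs₀ hy).le _)]
    push_cast
    exact mul_le_mul_of_nonneg_left (Real.rpow_le_rpow_of_nonpos hpos hy.1 he) (abs_nonneg _)
  rw [hrpow]
  refine (abs_integral_add_mul_le_of_moments_eq_zero hD
    (fun y hy => (Real.contDiffAt_rpow_const_of_ne (hs₀ hy).ne').contDiffWithinAt)
    hderiv hψ hsupp hmom).trans (le_of_eq ?_)
  ring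

lemma lintegral_rpow_abs_waveletCoeff_lt_top {m : ℕ} {p : ℝ} (hp : 0 < p) (he : -1 < e)
    (hep : (e - (m + 1)) * p < -1) (hD : 0 < D) (hψ : Continuous ψ)
    (hsupp : Function.support ψ ⊆ Icc (-D) D) (hmom : ∀ k ≤ m, ∫ u, u ^ k * ψ u = 0) :
    ∫⁻ t, ENNReal.ofReal (|waveletCoeff e ψ t| ^ p) < ⊤ := by
  have hψc : HasCompactSupport ψ := .of_support_subset_isCompact isCompact_Icc hsupp
  obtain ⟨C, hC⟩ := hψc.exists_bound_of_continuous hψ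
  simp only [Real.norm_eq_abs] at hC
  set B := C * ∫ x in (-(2 * D))..(3 * D), posPow x e
  set K := |∏ j ∈ Finset.range (m + 1), (e - j)| * (2 * D) ^ (m + 1) / m ! * ∫ u, |ψ u|
  have hK : 0 ≤ K := by positivity
  have hq : e - (m + 1) ≤ 0 := by nlinarith
  set g : ℝ → ℝ := fun t => (Icc (-D) (2 * D)).indicator (fun _ => B ^ p) t +
    (Ioi D).indicator (fun x => K ^ p * x ^ ((e - (m + 1)) * p)) (t - D)
  have hg : ∀ t, |waveletCoeff e ψ t| ^ p ≤ g t := by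
    have hmid : ∀ t, 0 ≤ (Icc (-D) (2 * D)).indicator (fun _ => B ^ p) t :=
      indicator_nonneg fun _ _ => Real.rpow_nonneg ((abs_nonneg _).trans
        (abs_waveletCoeff_le_of_mem_Icc he hD.le hC hsupp ‹_›)) _
    have htail : ∀ t, 0 ≤ (Ioi D).indicator (fun x => K ^ p * x ^ ((e - (m + 1)) * p)) (t - D) :=
      fun t => indicator_nonneg (fun x (hx : D < x) => by have := hD.trans hx; positivity) (t - D)
    intro t
    rcases le_or_gt t (-D) with ht | ht
    · rw [waveletCoeff_eq_zero_of_le hsupp ht, abs_zero, Real.zero_rpow hp.ne']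
      exact add_nonneg (hmid t) (htail t)
    rcases le_or_gt t (2 * D) with ht' | ht'
    · have hbound := Real.rpow_le_rpow (abs_nonneg _)
        (abs_waveletCoeff_le_of_mem_Icc he hD.le hC hsupp ⟨ht.le, ht'⟩) hp.le
      simpa only [g, indicator_of_mem (show t ∈ Icc (-D) (2 * D) from ⟨ht.le, ht'⟩)]
        using hbound.trans (le_add_of_nonneg_right (htail t))
    · have hpos : 0 < t - D := by linarith
      have hbound := Real.rpow_le_rpow (abs_nonneg _)
        (abs_waveletCoeff_le_rpow hD hψ hsupp hmom hq (by linarith : D < t)) hp.le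
      rw [Real.mul_rpow hK (Real.rpow_nonneg hpos.le _), ← Real.rpow_mul hpos.le] at hbound
      simpa only [g, indicator_of_mem (show t - D ∈ Ioi D by simp only [mem_Ioi]; linarith)]
        using hbound.trans (le_add_of_nonneg_left (hmid t))
  have hgint : Integrable g :=
    ((integrableOn_const measure_Icc_lt_top.ne).integrable_indicator measurableSet_Icc).add
      ((IntegrableOn.integrable_indicator ((integrableOn_Ioi_rpow_of_lt hep hD).const_mul _)
        measurableSet_Ioi).comp_sub_right D)
  exact (lintegral_mono fun t => ENNReal.ofReal_le_ofReal (hg t)).trans_lt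
    hgint.lintegral_lt_top

end WaveletCoeff

theorem sup_wavelet_scale_finite_general (α H D : ℝ) (ℓ : ℕ) (ψ : ℝ → ℝ)
    (hα : 0 < α) (hH : 0 < H) (hH' : -(1/2) < H - 1/α)
    (hℓ : H < ℓ) (hD : 0 < D)
    (hψ : ContDiff ℝ ℓ ψ) (hsupp : Function.support ψ ⊆ Set.Icc (-D) D)
    (hmom : ∀ k : ℕ, k ≤ ℓ → ∫ t : ℝ, t ^ k * ψ t = 0) :
    (⨆ (n : ℕ) (_ : 1 ≤ n),
      ∫⁻ s in Set.Ioi (0:ℝ),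
        ENNReal.ofReal (|∫ u : ℝ, posPow (u + n - s) (H - 1/α) * ψ u| ^ α)) < ⊤ := by
  obtain ⟨m, rfl⟩ : ∃ m, ℓ = m + 1 := Nat.exists_eq_add_one.2 (by exact_mod_cast hH.trans hℓ)
  have hdecay : (H - 1 / α - (m + 1)) * α < -1 := by
    push_cast at hℓ
    have : (H - (m + 1)) * α < 0 := mul_neg_of_neg_of_pos (by linarith) hα
    field_simp at this ⊢
    linarith
  have hfin := lintegral_rpow_abs_waveletCoeff_lt_top hα (by linarith) hdecay hD hψ.continuous
    hsupp fun k hk => hmom k (by omega)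
  refine lt_of_le_of_lt (iSup₂_le fun n _ => ?_) hfin
  calc ∫⁻ s in Ioi 0, ENNReal.ofReal (|∫ u, posPow (u + n - s) (H - 1 / α) * ψ u| ^ α)
      = ∫⁻ s in Ioi 0, ENNReal.ofReal (|waveletCoeff (H - 1 / α) ψ (n - s)| ^ α) := by
        simp only [waveletCoeff, add_sub_assoc]
    _ ≤ ∫⁻ s, ENNReal.ofReal (|waveletCoeff (H - 1 / α) ψ (n - s)| ^ α) :=
        setLIntegral_le_lintegral _ _
    _ = ∫⁻ t, ENNReal.ofReal (|waveletCoeff (H - 1 / α) ψ t| ^ α) :=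
        lintegral_sub_left_eq_self (fun t => ENNReal.ofReal (|waveletCoeff _ ψ t| ^ α)) _

/-- Uniform bound on the scale factors of the renormalized wavelet coefficients of the
Riemann–Liouville process: with `H' = H - 1/α > -1/2` and a `Cℓ` wavelet `ψ` supported in
`[-D,D]` with vanishing moments up to order `ℓ > H`, one has
`sup_{n ≥ 1} τ_n < ∞`, where `τ_n^α = ∫_0^∞ |∫ (u+n-s)₊^{H'} ψ(u) du|^α ds`. -/
theorem sup_wavelet_scale_finite (α H D : ℝ) (ℓ : ℕ) (ψ : ℝ → ℝ)
    (hα : 0 < α) (hα2 : α ≤ 2) (hH : 0 < H) (hH' : -(1/2) < H - 1/α)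
    (hℓ : H < ℓ) (hD : 0 < D)
    (hψ : ContDiff ℝ ℓ ψ) (hsupp : Function.support ψ ⊆ Set.Icc (-D) D)
    (hmom : ∀ k : ℕ, k ≤ ℓ → ∫ t : ℝ, t ^ k * ψ t = 0) :
    (⨆ (n : ℕ) (_ : 1 ≤ n),
      ∫⁻ s in Set.Ioi (0:ℝ),
        ENNReal.ofReal (|∫ u : ℝ, posPow (u + n - s) (H - 1/α) * ψ u| ^ α)) < ⊤ :=
  sup_wavelet_scale_finite_general α H D ℓ ψ hα hH hH' hℓ hD hψ hsupp hmom
end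

section
/- Let 0 < H' < 1 and 1 < α ≤ 2. Then there exists a constant C > 0 (depending only on H' and α) such that: (i) for every integer n ≥ 2, ∫_0^∞ | 2·(u + n − 1/2)^{H'} − (u + n − 1)^{H'} − (u + n)^{H'} |^α du ≤ C·(n−1)^{α(H'−2)+1}; and (ii) for every integer n ≥ 1, ∫_0^∞ | 2·(u + n − 1/2)^{H'} − (u + n − 1)^{H'} − (u + n)^{H'} |^α du ≤ C. -/
open MeasureTheory Set
open scoped ENNReal

/-!
Writing `x = u + n - 1`, the integrand is `|D x| ^ α` with `D x = 2 f (x + 1/2) - f x - f (x + 1)`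
for the concave function `f t = t ^ H'`. Applying the mean value theorem twice gives
`D x = H' (1 - H') / 4 · η ^ (H' - 2)` for some `η > x`, so `0 ≤ D x ≤ x ^ (H' - 2)`, while
subadditivity of `t ↦ t ^ H'` gives `D x ≤ (1/2) ^ H' ≤ 1`. Hence the integrand is at most
`min 1 (x ^ (α (H' - 2)))`, and `α (H' - 2) < -1` makes the tail integral from `n - 1` of
order `(n - 1) ^ (α (H' - 2) + 1)` and the whole integral from `0` finite.
-/

theorem exists_second_difference_eq {f f' f'' : ℝ → ℝ} {a h : ℝ} (hh : 0 < h)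
    (hf : ∀ t ∈ Icc a (a + 2 * h), HasDerivAt f (f' t) t)
    (hf' : ∀ t ∈ Ioo a (a + 2 * h), HasDerivAt f' (f'' t) t) :
    ∃ η ∈ Ioo a (a + 2 * h), f a - 2 * f (a + h) + f (a + 2 * h) = h ^ 2 * f'' η := by
  have hg : ∀ t ∈ Icc a (a + h),
      HasDerivAt (fun s => f (s + h) - f s) (f' (t + h) - f' t) t := fun t ht =>
    ((hf (t + h) ⟨by linarith [ht.1], by linarith [ht.2]⟩).comp_add_const t h).sub
      (hf t ⟨ht.1, by linarith [ht.2]⟩)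
  obtain ⟨ξ, hξ, hξ_eq⟩ := exists_hasDerivAt_eq_slope (fun s => f (s + h) - f s)
    (fun t => f' (t + h) - f' t) (by linarith : a < a + h)
    (fun t ht => (hg t ht).continuousAt.continuousWithinAt)
    (fun t ht => hg t (Ioo_subset_Icc_self ht))
  have hξη : ∀ t ∈ Icc ξ (ξ + h), t ∈ Ioo a (a + 2 * h) := fun t ht =>
    ⟨by linarith [hξ.1, ht.1], by linarith [hξ.2, ht.2]⟩
  obtain ⟨η, hη, hη_eq⟩ := exists_hasDerivAt_eq_slope f' f'' (by linarith : ξ < ξ + h)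
    (fun t ht => (hf' t (hξη t ht)).continuousAt.continuousWithinAt)
    (fun t ht => hf' t (hξη t (Ioo_subset_Icc_self ht)))
  refine ⟨η, hξη η (Ioo_subset_Icc_self hη), ?_⟩
  rw [hη_eq, add_sub_cancel_left, hξ_eq, add_sub_cancel_left, show a + h + h = a + 2 * h by ring]
  field_simp
  ring

/-- The Schauder coefficient of `t ↦ t ^ p` for the hat function supported on `[x, x + 1]`. -/
noncomputable def rpowSchauderCoeff (p x : ℝ) : ℝ :=
  2 * (x + 1 / 2) ^ p - x ^ p - (x + 1) ^ p

theorem exists_rpowSchauderCoeff_eq (p : ℝ) {x : ℝ} (hx : 0 < x) :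
    ∃ η, x < η ∧ rpowSchauderCoeff p x = p * (1 - p) / 4 * η ^ (p - 2) := by
  obtain ⟨η, hη, hη_eq⟩ := exists_second_difference_eq (f := fun t => t ^ p)
    (f' := fun t => p * t ^ (p - 1)) (f'' := fun t => p * ((p - 1) * t ^ (p - 1 - 1)))
    (a := x) (h := 1 / 2) (by norm_num)
    (fun t ht => Real.hasDerivAt_rpow_const (Or.inl (hx.trans_le ht.1).ne'))
    (fun t ht => (Real.hasDerivAt_rpow_const (Or.inl (hx.trans ht.1).ne')).const_mul p)
  refine ⟨η, hη.1, ?_⟩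
  rw [show p - 2 = p - 1 - 1 by ring, rpowSchauderCoeff, show x + 1 = x + 2 * (1 / 2) by ring]
  linear_combination -hη_eq

section rpowSchauderCoeff

variable {p x : ℝ}

theorem rpowSchauderCoeff_nonneg (hp0 : 0 ≤ p) (hp1 : p ≤ 1) (hx : 0 < x) :
    0 ≤ rpowSchauderCoeff p x := by
  obtain ⟨η, hη, hη_eq⟩ := exists_rpowSchauderCoeff_eq p hx
  rw [hη_eq]
  exact mul_nonneg (by nlinarith) (Real.rpow_nonneg (hx.trans hη).le _)

theorem rpowSchauderCoeff_le_rpow (hp0 : 0 ≤ p) (hp1 : p ≤ 1) (hx : 0 < x) :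
    rpowSchauderCoeff p x ≤ x ^ (p - 2) := by
  obtain ⟨η, hη, hη_eq⟩ := exists_rpowSchauderCoeff_eq p hx
  rw [hη_eq]
  calc p * (1 - p) / 4 * η ^ (p - 2) ≤ 1 * x ^ (p - 2) :=
        mul_le_mul (by nlinarith) (Real.rpow_le_rpow_of_nonpos hx hη.le (by linarith))
          (Real.rpow_nonneg (hx.trans hη).le _) zero_le_one
    _ = x ^ (p - 2) := one_mul _

theorem rpowSchauderCoeff_le_one (hp0 : 0 ≤ p) (hp1 : p ≤ 1) (hx : 0 ≤ x) :
    rpowSchauderCoeff p x ≤ 1 := by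
  have hmono : (x + 1 / 2) ^ p ≤ (x + 1) ^ p := Real.rpow_le_rpow (by linarith) (by linarith) hp0
  have hsub : (x + 1 / 2) ^ p ≤ x ^ p + (1 / 2) ^ p :=
    Real.rpow_add_le_add_rpow hx (by norm_num) hp0 hp1
  have hhalf : (1 / 2 : ℝ) ^ p ≤ 1 := Real.rpow_le_one (by norm_num) (by norm_num) hp0
  rw [rpowSchauderCoeff]
  linarith

variable {α : ℝ}

theorem abs_rpowSchauderCoeff_rpow_le_rpow (hp0 : 0 ≤ p) (hp1 : p ≤ 1) (hα : 0 ≤ α)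
    (hx : 0 < x) : |rpowSchauderCoeff p x| ^ α ≤ x ^ (α * (p - 2)) := by
  rw [abs_of_nonneg (rpowSchauderCoeff_nonneg hp0 hp1 hx), mul_comm, Real.rpow_mul hx.le]
  exact Real.rpow_le_rpow (rpowSchauderCoeff_nonneg hp0 hp1 hx)
    (rpowSchauderCoeff_le_rpow hp0 hp1 hx) hα

theorem abs_rpowSchauderCoeff_rpow_le_one (hp0 : 0 ≤ p) (hp1 : p ≤ 1) (hα : 0 ≤ α)
    (hx : 0 < x) : |rpowSchauderCoeff p x| ^ α ≤ 1 := by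
  rw [abs_of_nonneg (rpowSchauderCoeff_nonneg hp0 hp1 hx)]
  exact Real.rpow_le_one (rpowSchauderCoeff_nonneg hp0 hp1 hx)
    (rpowSchauderCoeff_le_one hp0 hp1 hx.le) hα

end rpowSchauderCoeff

theorem lintegral_Ioi_zero_comp_add_right (f : ℝ → ℝ≥0∞) (c : ℝ) :
    ∫⁻ u in Ioi 0, f (u + c) = ∫⁻ x in Ioi c, f x := by
  have h := (measurePreserving_add_right volume c).setLIntegral_comp_preimage_emb
    (measurableEmbedding_addRight c) f (Ioi c)
  rwa [preimage_add_const_Ioi, sub_self] at h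

theorem lintegral_Ioi_ofReal_rpow {β : ℝ} (hβ : β < -1) {c : ℝ} (hc : 0 < c) :
    ∫⁻ x in Ioi c, ENNReal.ofReal (x ^ β) = ENNReal.ofReal (-c ^ (β + 1) / (β + 1)) := by
  rw [← integral_Ioi_rpow_of_lt hβ hc,
    ofReal_integral_eq_lintegral_ofReal (integrableOn_Ioi_rpow_of_lt hβ hc)]
  filter_upwards [self_mem_ae_restrict measurableSet_Ioi] with x hx
  exact Real.rpow_nonneg (hc.trans hx).le _

section lintegral

variable {p α c : ℝ}

theorem lintegral_Ioi_rpowSchauderCoeff_le_of_pos (hp0 : 0 ≤ p) (hp1 : p ≤ 1)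
    (hβ : α * (p - 2) < -1) (hc : 0 < c) :
    ∫⁻ x in Ioi c, ENNReal.ofReal (|rpowSchauderCoeff p x| ^ α)
      ≤ ENNReal.ofReal (-c ^ (α * (p - 2) + 1) / (α * (p - 2) + 1)) := by
  have hα : 0 ≤ α := by nlinarith
  rw [← lintegral_Ioi_ofReal_rpow hβ hc]
  refine setLIntegral_mono' measurableSet_Ioi fun x hx => ENNReal.ofReal_le_ofReal ?_
  exact abs_rpowSchauderCoeff_rpow_le_rpow hp0 hp1 hα (hc.trans hx)

theorem lintegral_Ioi_rpowSchauderCoeff_le_of_nonneg (hp0 : 0 ≤ p) (hp1 : p ≤ 1)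
    (hβ : α * (p - 2) < -1) (hc : 0 ≤ c) :
    ∫⁻ x in Ioi c, ENNReal.ofReal (|rpowSchauderCoeff p x| ^ α)
      ≤ ENNReal.ofReal (1 - 1 / (α * (p - 2) + 1)) := by
  have hα : 0 ≤ α := by nlinarith
  have hnear : ∫⁻ x in Ioc 0 1, ENNReal.ofReal (|rpowSchauderCoeff p x| ^ α) ≤ 1 := by
    calc ∫⁻ x in Ioc 0 1, ENNReal.ofReal (|rpowSchauderCoeff p x| ^ α)
        ≤ ∫⁻ _ in Ioc (0 : ℝ) 1, 1 :=
          setLIntegral_mono' measurableSet_Ioc fun x hx => ENNReal.ofReal_le_one.mpr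
            (abs_rpowSchauderCoeff_rpow_le_one hp0 hp1 hα hx.1)
      _ = 1 := by simp
  have hfar := lintegral_Ioi_rpowSchauderCoeff_le_of_pos hp0 hp1 hβ one_pos
  rw [Real.one_rpow, neg_div] at hfar
  calc ∫⁻ x in Ioi c, ENNReal.ofReal (|rpowSchauderCoeff p x| ^ α)
      ≤ ∫⁻ x in Ioi 0, ENNReal.ofReal (|rpowSchauderCoeff p x| ^ α) :=
        lintegral_mono_set (Ioi_subset_Ioi hc)
    _ = (∫⁻ x in Ioc 0 1, ENNReal.ofReal (|rpowSchauderCoeff p x| ^ α))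
          + ∫⁻ x in Ioi 1, ENNReal.ofReal (|rpowSchauderCoeff p x| ^ α) := by
        rw [← lintegral_union measurableSet_Ioi (Ioc_disjoint_Ioi le_rfl),
          Ioc_union_Ioi_eq_Ioi zero_le_one]
    _ ≤ ENNReal.ofReal 1 + ENNReal.ofReal (-(1 / (α * (p - 2) + 1))) := by
        rw [ENNReal.ofReal_one]
        exact add_le_add hnear hfar
    _ = ENNReal.ofReal (1 - 1 / (α * (p - 2) + 1)) := by
        rw [← ENNReal.ofReal_add zero_le_one
          (neg_nonneg.mpr (div_nonpos_of_nonneg_of_nonpos zero_le_one (by linarith))),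
          ← sub_eq_add_neg]

end lintegral

theorem lintegral_Ioi_zero_eq_lintegral_rpowSchauderCoeff (p α c : ℝ) :
    ∫⁻ u in Ioi (0 : ℝ),
        ENNReal.ofReal (|2 * (u + c - 1 / 2) ^ p - (u + c - 1) ^ p - (u + c) ^ p| ^ α)
      = ∫⁻ x in Ioi (c - 1), ENNReal.ofReal (|rpowSchauderCoeff p x| ^ α) := by
  rw [← lintegral_Ioi_zero_comp_add_right
    (fun x => ENNReal.ofReal (|rpowSchauderCoeff p x| ^ α)) (c - 1)]
  congr! 5 with u
  rw [rpowSchauderCoeff]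
  ring_nf

theorem schauder_scale_estimate_LM_general (H' α : ℝ)
    (h0 : 0 < H') (h1 : H' < 1) (hα1 : 1 < α) :
    ∃ C : ℝ, 0 < C ∧
      (∀ n : ℕ, 2 ≤ n →
        ∫⁻ u in Set.Ioi (0:ℝ),
          ENNReal.ofReal
            (|2 * (u + n - 1/2) ^ H' - (u + n - 1) ^ H' - (u + n) ^ H'| ^ α)
          ≤ ENNReal.ofReal (C * ((n : ℝ) - 1) ^ (α * (H' - 2) + 1))) ∧
      (∀ n : ℕ, 1 ≤ n →
        ∫⁻ u in Set.Ioi (0:ℝ),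
          ENNReal.ofReal
            (|2 * (u + n - 1/2) ^ H' - (u + n - 1) ^ H' - (u + n) ^ H'| ^ α)
          ≤ ENNReal.ofReal C) := by
  have hβ : α * (H' - 2) < -1 := by nlinarith
  have hK : 1 / (α * (H' - 2) + 1) < 0 := one_div_neg.mpr (by linarith)
  refine ⟨1 - 1 / (α * (H' - 2) + 1), by linarith, fun n hn => ?_, fun n hn => ?_⟩
  · have hc : (0 : ℝ) < n - 1 := by
      have : (2 : ℝ) ≤ n := by exact_mod_cast hn
      linarith
    rw [lintegral_Ioi_zero_eq_lintegral_rpowSchauderCoeff]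
    refine (lintegral_Ioi_rpowSchauderCoeff_le_of_pos h0.le h1.le hβ hc).trans
      (ENNReal.ofReal_le_ofReal ?_)
    calc -((n : ℝ) - 1) ^ (α * (H' - 2) + 1) / (α * (H' - 2) + 1)
        = -(1 / (α * (H' - 2) + 1)) * ((n : ℝ) - 1) ^ (α * (H' - 2) + 1) := by ring
      _ ≤ _ := by gcongr; linarith
  · have hc : (0 : ℝ) ≤ n - 1 := by
      have : (1 : ℝ) ≤ n := by exact_mod_cast hn
      linarith
    rw [lintegral_Ioi_zero_eq_lintegral_rpowSchauderCoeff]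
    exact lintegral_Ioi_rpowSchauderCoeff_le_of_nonneg h0.le h1.le hβ hc

/-- Estimates on the scale factors of the Schauder coefficients of the long-memory
process: for `0 < H' < 1` and `1 < α ≤ 2` there is `C > 0` with
(i) `∫_0^∞ |2(u+n-1/2)^{H'} - (u+n-1)^{H'} - (u+n)^{H'}|^α du ≤ C (n-1)^{α(H'-2)+1}`
for `n ≥ 2`, and (ii) the same integral is `≤ C` for every `n ≥ 1`. -/
theorem schauder_scale_estimate_LM (H' α : ℝ)
    (h0 : 0 < H') (h1 : H' < 1) (hα1 : 1 < α) (hα2 : α ≤ 2) :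
    ∃ C : ℝ, 0 < C ∧
      (∀ n : ℕ, 2 ≤ n →
        ∫⁻ u in Set.Ioi (0:ℝ),
          ENNReal.ofReal
            (|2 * (u + n - 1/2) ^ H' - (u + n - 1) ^ H' - (u + n) ^ H'| ^ α)
          ≤ ENNReal.ofReal (C * ((n : ℝ) - 1) ^ (α * (H' - 2) + 1))) ∧
      (∀ n : ℕ, 1 ≤ n →
        ∫⁻ u in Set.Ioi (0:ℝ),
          ENNReal.ofReal
            (|2 * (u + n - 1/2) ^ H' - (u + n - 1) ^ H' - (u + n) ^ H'| ^ α)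
          ≤ ENNReal.ofReal C) :=
  schauder_scale_estimate_LM_general H' α h0 h1 hα1
end

section
/- Let p ≥ 1, let a₀ < a₁ < … < a_n be reals, and let f: [a₀, a_n] → ℝ satisfy f(a₀) = f(a₁) = … = f(a_n) = 0. For a function f on an interval I, let V_p(f; I) = sup{ (Σ_{i=1}^m |f(t_i) − f(t_{i−1})|^p)^{1/p} : m ≥ 1, t_0 < t_1 < … < t_m, all t_i ∈ I } denote its strong p-variation. Then V_p(f; [a₀, a_n]) ≤ 2^{1−1/p} · (Σ_{i=1}^n V_p(f; [a_{i−1}, a_i])^p)^{1/p}. -/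
/-!
Refine a partition `t₀ < ⋯ < t_m` of `[a₀, a_n]` at the zeros `aⱼ` of `f`. An increment
`|f(t_{i+1}) - f(tᵢ)|` whose endpoints lie in different intervals splits, because `f(aⱼ) = 0`,
into `|f(t_{i+1}) - f(a_l)|` and `|f(aⱼ) - f(tᵢ)|`, and `|x - y|^p ≤ 2^{p-1}(|x|^p + |y|^p)`
by convexity. After the split, the pieces in each `[aⱼ, a_{j+1}]` are the increments of a
partition of that interval that includes its endpoints, so their sum is at most
`V_p(f; [aⱼ, a_{j+1}])^p`. Taking `p`-th roots gives the constant `(2^{p-1})^{1/p} = 2^{1-1/p}`.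
-/

open MeasureTheory Filter Set
open scoped ENNReal NNReal Topology

/-- The strong `p`-variation of `f` on the set `I`: the supremum, over all finite
increasing sequences `t 0 < t 1 < ⋯ < t n` of points of `I`, of
`(Σ_{i<n} |f (t (i+1)) - f (t i)|^p)^{1/p}` (with values in `ℝ≥0∞`). -/
noncomputable def pVar (p : ℝ) (f : ℝ → ℝ) (I : Set ℝ) : ℝ≥0∞ :=
  ⨆ (n : ℕ) (t : ℕ → ℝ) (_ : ∀ i ≤ n, t i ∈ I) (_ : ∀ i < n, t i < t (i + 1)),
    (∑ i ∈ Finset.range n, (ENNReal.ofReal |f (t (i + 1)) - f (t i)|) ^ p) ^ (1 / p)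

noncomputable def pVarSum (p : ℝ) (f : ℝ → ℝ) (t : ℕ → ℝ) (m : ℕ) : ℝ≥0∞ :=
  ∑ i ∈ Finset.range m, ENNReal.ofReal |f (t (i + 1)) - f (t i)| ^ p

/-- When `t 0` and `t m` lie in an interval at whose endpoints `f` vanishes, the end terms
are the increments of `f` to and from those endpoints; they are weighted by the constant
`2^{p-1}` paid for splitting an increment at a zero of `f`. -/
noncomputable def pVarSumEnds (p : ℝ) (f : ℝ → ℝ) (t : ℕ → ℝ) (m : ℕ) : ℝ≥0∞ :=
  2 ^ (p - 1) * (ENNReal.ofReal |f (t 0)| ^ p + ENNReal.ofReal |f (t m)| ^ p) + pVarSum p f t m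

lemma le_of_forall_le_succ {α : Type*} [Preorder α] {t : ℕ → α} {m : ℕ}
    (hmono : ∀ i < m, t i ≤ t (i + 1)) {i j : ℕ} (hij : i ≤ j) (hjm : j ≤ m) : t i ≤ t j := by
  induction j, hij using Nat.le_induction with
  | base => exact le_rfl
  | succ k _ ih => exact (ih (by omega)).trans (hmono k (by omega))

lemma ENNReal.ofReal_abs_sub_rpow_le {p : ℝ} (hp : 1 ≤ p) (x y : ℝ) :
    ENNReal.ofReal |x - y| ^ p ≤ 2 ^ (p - 1) * (ENNReal.ofReal |x| ^ p + ENNReal.ofReal |y| ^ p) :=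
  calc ENNReal.ofReal |x - y| ^ p ≤ (ENNReal.ofReal |x| + ENNReal.ofReal |y|) ^ p := by
        gcongr
        rw [← ENNReal.ofReal_add (abs_nonneg x) (abs_nonneg y)]
        exact ENNReal.ofReal_le_ofReal (abs_sub x y)
    _ ≤ _ := ENNReal.rpow_add_le_mul_rpow_add_rpow _ _ hp

section pVarSum

variable {p : ℝ} {f : ℝ → ℝ} {t : ℕ → ℝ} {m : ℕ}

lemma pVarSum_succ' :
    pVarSum p f t (m + 1) =
      ENNReal.ofReal |f (t 1) - f (t 0)| ^ p + pVarSum p f (fun i => t (i + 1)) m := by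
  rw [pVarSum, Finset.sum_range_succ', add_comm]
  rfl

lemma pVarSum_add (k r : ℕ) :
    pVarSum p f t (k + r) = pVarSum p f t k + pVarSum p f (fun i => t (k + i)) r := by
  simp only [pVarSum, Finset.sum_range_add, add_assoc]

lemma pVarSum_congr {s : ℕ → ℝ} (h : ∀ i ≤ m, s i = t i) : pVarSum p f s m = pVarSum p f t m :=
  Finset.sum_congr rfl fun i hi => by
    rw [Finset.mem_range] at hi
    rw [h i hi.le, h (i + 1) hi]

lemma pVarSum_le_pVar_rpow (hp : 0 < p) {I : Set ℝ} (hI : ∀ i ≤ m, t i ∈ I)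
    (hmono : ∀ i < m, t i < t (i + 1)) : pVarSum p f t m ≤ pVar p f I ^ p := by
  have h : pVarSum p f t m ^ p⁻¹ ≤ pVar p f I := by
    rw [← one_div]
    exact le_iSup_of_le m <| le_iSup_of_le t <| le_iSup_of_le hI <| le_iSup_of_le hmono le_rfl
  simpa only [ENNReal.rpow_inv_rpow hp.ne'] using ENNReal.rpow_le_rpow h hp.le

/-- Repeated points contribute nothing, so they can be dropped. -/
lemma exists_strictMono_pVarSum_eq (hp : 0 < p) {I : Set ℝ} (hI : ∀ i ≤ m, t i ∈ I)
    (hmono : ∀ i < m, t i ≤ t (i + 1)) :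
    ∃ m' t', (∀ i ≤ m', t' i ∈ I) ∧ (∀ i < m', t' i < t' (i + 1)) ∧ t' 0 = t 0 ∧
      pVarSum p f t' m' = pVarSum p f t m := by
  induction m generalizing t with
  | zero => exact ⟨0, t, hI, by simp, rfl, rfl⟩
  | succ m ih =>
    obtain ⟨m', t', hI', hstrict, ht'0, hsum⟩ :=
      ih (t := fun i => t (i + 1)) (fun i hi => hI _ (by omega)) (fun i hi => hmono _ (by omega))
    rcases (hmono 0 (by omega)).eq_or_lt with h01 | h01
    · refine ⟨m', t', hI', hstrict, ht'0.trans h01.symm, ?_⟩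
      rw [pVarSum_succ', ← h01, sub_self, abs_zero, ENNReal.ofReal_zero,
        ENNReal.zero_rpow_of_pos hp, zero_add, hsum]
    · refine ⟨m' + 1, fun | 0 => t 0 | i + 1 => t' i, ?_, ?_, rfl, ?_⟩
      · rintro (_ | i) hi
        exacts [hI 0 (by omega), hI' i (by omega)]
      · rintro (_ | i) hi
        · show t 0 < t' 0
          rwa [ht'0]
        · exact hstrict i (by omega)
      · rw [pVarSum_succ', pVarSum_succ' (m := m), ← hsum]
        simp only [ht'0]

lemma pVarSum_le_pVar_rpow_of_le_succ (hp : 0 < p) {I : Set ℝ} (hI : ∀ i ≤ m, t i ∈ I)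
    (hmono : ∀ i < m, t i ≤ t (i + 1)) : pVarSum p f t m ≤ pVar p f I ^ p := by
  obtain ⟨m', t', hI', hstrict, -, hsum⟩ := exists_strictMono_pVarSum_eq (f := f) hp hI hmono
  exact hsum ▸ pVarSum_le_pVar_rpow hp hI' hstrict

/-- Compare with the partition `b, t 0, …, t m, c` of `[b, c]`. -/
lemma add_pVarSum_add_le_pVar_rpow (hp : 0 < p) {b c : ℝ} (hb : f b = 0) (hc : f c = 0)
    (hI : ∀ i ≤ m, t i ∈ Icc b c) (hmono : ∀ i < m, t i ≤ t (i + 1)) :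
    ENNReal.ofReal |f (t 0)| ^ p + pVarSum p f t m + ENNReal.ofReal |f (t m)| ^ p ≤
      pVar p f (Icc b c) ^ p := by
  set u := Function.update t (m + 1) c
  have hu : ∀ i ≤ m, u i = t i := fun i hi => Function.update_of_ne (by omega) _ _
  have hbc : b ≤ c := (hI 0 (by omega)).1.trans (hI 0 (by omega)).2
  have hsum : pVarSum p f (fun | 0 => b | i + 1 => u i) (m + 2) =
      ENNReal.ofReal |f (t 0)| ^ p + pVarSum p f t m + ENNReal.ofReal |f (t m)| ^ p := by
    rw [pVarSum_succ', pVarSum, Finset.sum_range_succ, ← pVarSum, pVarSum_congr hu]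
    simp only [u, Function.update_self, hu 0 (by omega), hu m le_rfl, hb, hc, sub_zero,
      zero_sub, abs_neg, add_assoc]
  rw [← hsum]
  refine pVarSum_le_pVar_rpow_of_le_succ hp ?_ ?_
  · rintro (_ | i) hi
    · exact ⟨le_rfl, hbc⟩
    · rcases (show i ≤ m ∨ i = m + 1 by omega) with hi | rfl
      · simpa only [hu i hi] using hI i hi
      · simpa [u] using hbc
  · rintro (_ | i) hi
    · simpa only [hu 0 (by omega)] using (hI 0 (by omega)).1
    · rcases (show i < m ∨ i = m by omega) with hi | rfl
      · simpa only [hu i hi.le, hu (i + 1) hi] using hmono i hi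
      · simpa [u, hu i le_rfl] using (hI i le_rfl).2

lemma pVarSumEnds_le_of_mem_Icc (hp : 1 ≤ p) {b c : ℝ} (hb : f b = 0) (hc : f c = 0)
    (hI : ∀ i ≤ m, t i ∈ Icc b c) (hmono : ∀ i < m, t i ≤ t (i + 1)) :
    pVarSumEnds p f t m ≤ 2 ^ (p - 1) * pVar p f (Icc b c) ^ p := by
  have hC : (1 : ℝ≥0∞) ≤ 2 ^ (p - 1) := by
    simpa using ENNReal.rpow_le_rpow_of_exponent_le one_le_two (show 0 ≤ p - 1 by linarith)
  unfold pVarSumEnds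
  calc _ ≤
        2 ^ (p - 1) * (ENNReal.ofReal |f (t 0)| ^ p + ENNReal.ofReal |f (t m)| ^ p) +
          2 ^ (p - 1) * pVarSum p f t m := by
        gcongr
        exact le_mul_of_one_le_left zero_le hC
    _ = 2 ^ (p - 1) *
          (ENNReal.ofReal |f (t 0)| ^ p + pVarSum p f t m + ENNReal.ofReal |f (t m)| ^ p) := by
        ring
    _ ≤ 2 ^ (p - 1) * pVar p f (Icc b c) ^ p := by
        gcongr
        exact add_pVarSum_add_le_pVar_rpow (by linarith) hb hc hI hmono

lemma pVarSumEnds_le_add (hp : 1 ≤ p) (k r : ℕ) :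
    pVarSumEnds p f t (k + 1 + r) ≤
      pVarSumEnds p f t k + pVarSumEnds p f (fun i => t (k + 1 + i)) r := by
  have hsplit : pVarSum p f t (k + 1 + r) = pVarSum p f t k +
      ENNReal.ofReal |f (t (k + 1)) - f (t k)| ^ p + pVarSum p f (fun i => t (k + 1 + i)) r := by
    rw [pVarSum_add, pVarSum, Finset.sum_range_succ, ← pVarSum]
  simp only [pVarSumEnds, hsplit, add_zero]
  calc _ ≤ 2 ^ (p - 1) * (ENNReal.ofReal |f (t 0)| ^ p + ENNReal.ofReal |f (t (k + 1 + r))| ^ p) +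
        (pVarSum p f t k +
          2 ^ (p - 1) * (ENNReal.ofReal |f (t (k + 1))| ^ p + ENNReal.ofReal |f (t k)| ^ p) +
          pVarSum p f (fun i => t (k + 1 + i)) r) := by
        gcongr
        exact ENNReal.ofReal_abs_sub_rpow_le hp _ _
    _ = _ := by ring

end pVarSum

lemma pVarSumEnds_le_sum {p : ℝ} (hp : 1 ≤ p) {f : ℝ → ℝ} {a : ℕ → ℝ} {n : ℕ}
    (hf : ∀ i ≤ n, f (a i) = 0) {m : ℕ} {t : ℕ → ℝ} (hI : ∀ i ≤ m, t i ∈ Icc (a 0) (a n))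
    (hmono : ∀ i < m, t i ≤ t (i + 1)) :
    pVarSumEnds p f t m ≤
      2 ^ (p - 1) * ∑ j ∈ Finset.range n, pVar p f (Icc (a j) (a (j + 1))) ^ p := by
  induction n generalizing m t with
  | zero =>
    have hft : ∀ i ≤ m, f (t i) = 0 := fun i hi => by
      rw [le_antisymm (hI i hi).2 (hI i hi).1, hf 0 le_rfl]
    have hsum : pVarSum p f t m = 0 := Finset.sum_eq_zero fun i hi => by
      rw [Finset.mem_range] at hi
      simp [hft i hi.le, hft (i + 1) hi, ENNReal.zero_rpow_of_pos (by linarith : 0 < p)]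
    simp [pVarSumEnds, hsum, hft 0 (Nat.zero_le m), hft m le_rfl,
      ENNReal.zero_rpow_of_pos (by linarith : 0 < p)]
  | succ n ih =>
    rw [Finset.sum_range_succ, mul_add]
    by_cases hleft : ∀ i ≤ m, t i ≤ a n
    · exact (ih (fun i hi => hf i (by omega)) (fun i hi => ⟨(hI i hi).1, hleft i hi⟩)
        hmono).trans le_self_add
    push Not at hleft
    obtain ⟨i₀, hi₀m, hi₀⟩ := hleft
    have hex : ∃ i, a n < t i := ⟨i₀, hi₀⟩
    have hkm : Nat.find hex ≤ m := (Nat.find_min' hex hi₀).trans hi₀m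
    have hright : ∀ i, Nat.find hex ≤ i → i ≤ m → t i ∈ Icc (a n) (a (n + 1)) :=
      fun i hki him => ⟨(Nat.find_spec hex).le.trans (le_of_forall_le_succ hmono hki him),
        (hI i him).2⟩
    cases hk : Nat.find hex with
    | zero =>
      rw [hk] at hright
      exact (pVarSumEnds_le_of_mem_Icc hp (hf n (by omega)) (hf (n + 1) le_rfl)
        (fun i hi => hright i (Nat.zero_le i) hi) hmono).trans le_add_self
    | succ k =>
      rw [hk] at hkm hright
      have hk_left : ∀ i ≤ k, t i ≤ a n := fun i hi =>
        not_lt.1 (Nat.find_min hex (by omega))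
      obtain ⟨r, rfl⟩ : ∃ r, m = k + 1 + r := ⟨m - (k + 1), by omega⟩
      refine (pVarSumEnds_le_add hp k r).trans (add_le_add ?_ ?_)
      · exact ih (fun i hi => hf i (by omega)) (fun i hi => ⟨(hI i (by omega)).1, hk_left i hi⟩)
          fun i hi => hmono i (by omega)
      · refine pVarSumEnds_le_of_mem_Icc hp (hf n (by omega)) (hf (n + 1) le_rfl)
          (fun i hi => hright _ (by omega) (by omega)) fun i hi => ?_
        simpa only [add_assoc] using hmono (k + 1 + i) (by omega)

theorem pVar_subadditive_general (p : ℝ) (hp : 1 ≤ p) (n : ℕ) (a : ℕ → ℝ)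
    (f : ℝ → ℝ) (hf : ∀ i ≤ n, f (a i) = 0) :
    pVar p f (Set.Icc (a 0) (a n)) ≤
      ENNReal.ofReal (2 ^ (1 - 1/p)) *
        (∑ i ∈ Finset.range n, pVar p f (Set.Icc (a i) (a (i + 1))) ^ p) ^ (1 / p) := by
  have hp0 : 0 < p := by linarith
  refine iSup₂_le fun m t => iSup₂_le fun hI hstrict => ?_
  have hsum := le_add_self.trans (pVarSumEnds_le_sum hp hf hI fun i hi => (hstrict i hi).le)
  calc pVarSum p f t m ^ (1 / p)
      ≤ (2 ^ (p - 1) * ∑ i ∈ Finset.range n, pVar p f (Icc (a i) (a (i + 1))) ^ p) ^ (1 / p) :=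
        ENNReal.rpow_le_rpow hsum (by positivity)
    _ = _ := by
        rw [ENNReal.mul_rpow_of_nonneg _ _ (by positivity), ← ENNReal.rpow_mul,
          ← ENNReal.ofReal_rpow_of_pos two_pos, ENNReal.ofReal_ofNat]
        congr 2
        field_simp

/-- Subadditivity of the strong `p`-variation with constant `2^{1-1/p}` along a partition
at whose points `f` vanishes:
`V_p(f;[a₀,a_n]) ≤ 2^{1-1/p} (Σ_{i=1}^n V_p(f;[a_{i-1},a_i])^p)^{1/p}`. -/
theorem pVar_subadditive (p : ℝ) (hp : 1 ≤ p) (n : ℕ) (hn : 0 < n) (a : ℕ → ℝ)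
    (ha : ∀ i < n, a i < a (i + 1)) (f : ℝ → ℝ) (hf : ∀ i ≤ n, f (a i) = 0) :
    pVar p f (Set.Icc (a 0) (a n)) ≤
      ENNReal.ofReal (2 ^ (1 - 1/p)) *
        (∑ i ∈ Finset.range n, pVar p f (Set.Icc (a i) (a (i + 1))) ^ p) ^ (1 / p) :=
  pVar_subadditive_general p hp n a f hf
end
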